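/- arXiv:1903.02216 — 4 statements merged into one kernel-verified Lean document; each statement's English description precedes it below -/
import Mathlib

section
/- Let N ≥ 2 be an integer and β > N. Then there exists a unique x > 0 satisfying x = β f(x). -/
/-!
Write `A n x = ∫₀^π e^{x cos θ} sin^n θ dθ` (`besselIntegral`) and `q n = A (n + 2) / A n`
(`besselIntegralRatio`), so that `f = x q_{N-2} / (N - 1)` and, for `x > 0`, the equation
`x = β f(x)` reads `q_{N-2}(x) = (N - 1) / β`. Now `q n 0 = (n + 1) / (n + 2)` (Wallis),
`q n x ≤ (n + 1) / x` (integrating by parts,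
`x A (n + 2) x = (n + 1) ∫₀^π e^{x cos θ} cos θ sin^n θ dθ ≤ (n + 1) A n x`), and `q n` is strictly
decreasing on `[0, ∞)`. For the last point replace `e^{x cos θ}` by `cosh (x cos θ)` (symmetry
`θ ↦ π - θ`) and symmetrise the product of two integrals: `2 (A (n+2) x A n y - A (n+2) y A n x)`
is the integral over `[0, π]²` of
`(cos² s - cos² t) (cosh (y cos s) cosh (x cos t) - cosh (x cos s) cosh (y cos t)) sin^n s sin^n t`,
which is nonnegative for `0 ≤ x < y` because `cosh (y u) / cosh (x u)` increases with `|u|`.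
The intermediate value theorem gives a solution, strict monotonicity its uniqueness.
-/

open MeasureTheory Real Set

noncomputable section

/-- The ratio `I_{N/2}(x) / I_{N/2-1}(x)` of modified Bessel functions of the first kind,
expressed via the integral representation
`f(x) = (x/(N-1)) * (∫₀^π e^{x cos θ} sin^N θ dθ) / (∫₀^π e^{x cos θ} sin^{N-2} θ dθ)`. -/
def besselRatio (N : ℕ) (x : ℝ) : ℝ :=
  x / ((N : ℝ) - 1) *
      (∫ θ in (0:ℝ)..π, Real.exp (x * Real.cos θ) * Real.sin θ ^ N) /
    ∫ θ in (0:ℝ)..π, Real.exp (x * Real.cos θ) * Real.sin θ ^ (N - 2)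

def besselIntegral (n : ℕ) (x : ℝ) : ℝ := ∫ θ in (0:ℝ)..π, exp (x * cos θ) * sin θ ^ n

def besselIntegralRatio (n : ℕ) (x : ℝ) : ℝ := besselIntegral (n + 2) x / besselIntegral n x

theorem continuous_besselIntegral (n : ℕ) : Continuous (besselIntegral n) :=
  intervalIntegral.continuous_parametric_intervalIntegral_of_continuous'
    (f := fun x θ => exp (x * cos θ) * sin θ ^ n) (by fun_prop) 0 π

theorem besselIntegral_pos (n : ℕ) (x : ℝ) : 0 < besselIntegral n x := by
  refine intervalIntegral.intervalIntegral_pos_of_pos_on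
    ((by fun_prop : Continuous _).intervalIntegrable _ _) (fun θ hθ => ?_) pi_pos
  have := sin_pos_of_pos_of_lt_pi hθ.1 hθ.2
  positivity

theorem besselIntegral_add_two_zero (n : ℕ) :
    besselIntegral (n + 2) 0 = (n + 1) / (n + 2) * besselIntegral n 0 := by
  simp [besselIntegral, integral_sin_pow]

theorem mul_besselIntegral_add_two (n : ℕ) (x : ℝ) :
    x * besselIntegral (n + 2) x
      = (n + 1) * ∫ θ in (0:ℝ)..π, exp (x * cos θ) * cos θ * sin θ ^ n := by
  have hparts := intervalIntegral.integral_mul_deriv_eq_deriv_mul (a := 0) (b := π)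
    (fun θ _ => ((hasDerivAt_cos θ).const_mul x).exp)
    (fun θ _ => (hasDerivAt_sin θ).pow (n + 1))
    ((by fun_prop : Continuous _).intervalIntegrable _ _)
    ((by fun_prop : Continuous _).intervalIntegrable _ _)
  simp only [Pi.pow_apply, sin_zero, sin_pi, zero_pow (Nat.succ_ne_zero n), mul_zero, sub_zero,
    zero_sub, Nat.add_sub_cancel, Nat.cast_succ] at hparts
  calc x * besselIntegral (n + 2) x
      = -∫ θ in (0:ℝ)..π, exp (x * cos θ) * (x * -sin θ) * sin θ ^ (n + 1) := by
        rw [besselIntegral, ← intervalIntegral.integral_const_mul, ← intervalIntegral.integral_neg]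
        congr 1; ext θ; ring
    _ = ∫ θ in (0:ℝ)..π, exp (x * cos θ) * ((n + 1) * sin θ ^ n * cos θ) := hparts.symm
    _ = _ := by
        rw [← intervalIntegral.integral_const_mul]
        congr 1; ext θ; ring

theorem mul_besselIntegral_add_two_le (n : ℕ) (x : ℝ) :
    x * besselIntegral (n + 2) x ≤ (n + 1) * besselIntegral n x := by
  rw [mul_besselIntegral_add_two]
  gcongr
  refine intervalIntegral.integral_mono_on pi_pos.le
    ((by fun_prop : Continuous _).intervalIntegrable _ _) ((by fun_prop : Continuous _).intervalIntegrable _ _) fun θ hθ => ?_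
  have := sin_nonneg_of_nonneg_of_le_pi hθ.1 hθ.2
  rw [mul_right_comm]
  exact mul_le_of_le_one_right (by positivity) (cos_le_one θ)

theorem besselIntegral_eq_integral_cosh (n : ℕ) (x : ℝ) :
    besselIntegral n x = ∫ θ in (0:ℝ)..π, cosh (x * cos θ) * sin θ ^ n := by
  have hreflect : ∫ θ in (0:ℝ)..π, exp (-(x * cos θ)) * sin θ ^ n = besselIntegral n x := by
    simpa [besselIntegral, cos_pi_sub, sin_pi_sub] using
      intervalIntegral.integral_comp_sub_left (a := 0) (b := π)
        (fun θ => exp (x * cos θ) * sin θ ^ n) π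
  simp_rw [cosh_eq, div_mul_eq_mul_div, add_mul, intervalIntegral.integral_div]
  rw [intervalIntegral.integral_add ((by fun_prop : Continuous _).intervalIntegrable _ _)
    ((by fun_prop : Continuous _).intervalIntegrable _ _), hreflect, besselIntegral]
  ring

theorem two_mul_cosh_mul_cosh (P Q : ℝ) : 2 * (cosh P * cosh Q) = cosh (P + Q) + cosh (P - Q) := by
  rw [cosh_add, cosh_sub]; ring

theorem cosh_mul_cosh_lt_cosh_mul_cosh {x y a b : ℝ} (hx : 0 ≤ x) (hxy : x < y) (hab : |b| < |a|) :
    cosh (x * a) * cosh (y * b) < cosh (y * a) * cosh (x * b) := by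
  have hpos : 0 < (y ^ 2 - x ^ 2) * (a ^ 2 - b ^ 2) :=
    mul_pos (by nlinarith) (sub_pos.2 (sq_lt_sq.2 hab))
  have hplus : cosh (x * a + y * b) < cosh (y * a + x * b) := by
    rw [cosh_lt_cosh, ← sq_lt_sq]; nlinarith
  have hminus : cosh (x * a - y * b) < cosh (y * a - x * b) := by
    rw [cosh_lt_cosh, ← sq_lt_sq]; nlinarith
  have := two_mul_cosh_mul_cosh (x * a) (y * b)
  have := two_mul_cosh_mul_cosh (y * a) (x * b)
  linarith

theorem sq_sub_sq_mul_cosh_sub_pos {x y a b : ℝ} (hx : 0 ≤ x) (hxy : x < y) (hab : |a| ≠ |b|) :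
    0 < (a ^ 2 - b ^ 2) * (cosh (y * a) * cosh (x * b) - cosh (x * a) * cosh (y * b)) := by
  rcases hab.lt_or_gt with hab | hab
  · have := cosh_mul_cosh_lt_cosh_mul_cosh hx hxy hab
    exact mul_pos_of_neg_of_neg (sub_neg.2 (sq_lt_sq.2 hab)) (by linarith)
  · have := cosh_mul_cosh_lt_cosh_mul_cosh hx hxy hab
    exact mul_pos (sub_pos.2 (sq_lt_sq.2 hab)) (by linarith)

theorem sq_sub_sq_mul_cosh_sub_nonneg {x y : ℝ} (hx : 0 ≤ x) (hxy : x < y) (a b : ℝ) :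
    0 ≤ (a ^ 2 - b ^ 2) * (cosh (y * a) * cosh (x * b) - cosh (x * a) * cosh (y * b)) := by
  by_cases hab : |a| = |b|
  · simp [sq_eq_sq_iff_abs_eq_abs a b |>.2 hab]
  · exact (sq_sub_sq_mul_cosh_sub_pos hx hxy hab).le

theorem two_mul_sub_integral_mul_integral_eq_integral_prod {α : Type*} [MeasurableSpace α]
    {ν : Measure α} [SFinite ν] {f g u v : α → ℝ} (hf : Integrable f ν) (hg : Integrable g ν)
    (hu : Integrable u ν) (hv : Integrable v ν) :
    2 * ((∫ s, f s ∂ν) * (∫ s, g s ∂ν) - (∫ s, u s ∂ν) * (∫ s, v s ∂ν))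
      = ∫ z, f z.1 * g z.2 + g z.1 * f z.2 - (u z.1 * v z.2 + v z.1 * u z.2) ∂ν.prod ν := by
  have hfg := hf.mul_prod hg
  have huv := hu.mul_prod hv
  have hsym₁ : Integrable (fun z : α × α => f z.1 * g z.2 + g z.1 * f z.2) (ν.prod ν) :=
    hfg.add (hg.mul_prod hf)
  have hsym₂ : Integrable (fun z : α × α => u z.1 * v z.2 + v z.1 * u z.2) (ν.prod ν) :=
    huv.add (hv.mul_prod hu)
  rw [integral_sub hsym₁ hsym₂, integral_add hfg (hg.mul_prod hf),
    integral_add huv (hv.mul_prod hu)]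
  simp only [integral_prod_mul]
  ring

theorem two_mul_besselIntegral_cross (n : ℕ) (x y : ℝ) :
    2 * (besselIntegral (n + 2) x * besselIntegral n y
        - besselIntegral (n + 2) y * besselIntegral n x)
      = ∫ z, (cos z.1 ^ 2 - cos z.2 ^ 2)
          * (cosh (y * cos z.1) * cosh (x * cos z.2) - cosh (x * cos z.1) * cosh (y * cos z.2))
          * (sin z.1 ^ n * sin z.2 ^ n)
        ∂(volume.restrict (Ioc 0 π)).prod (volume.restrict (Ioc 0 π)) := by
  have hint : ∀ (c : ℝ) (k : ℕ),
      Integrable (fun θ => cosh (c * cos θ) * sin θ ^ k) (volume.restrict (Ioc 0 π)) :=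
    fun c k => (by fun_prop : Continuous _).integrableOn_Ioc
  simp only [besselIntegral_eq_integral_cosh, intervalIntegral.integral_of_le pi_pos.le]
  rw [two_mul_sub_integral_mul_integral_eq_integral_prod
    (hint x _) (hint y _) (hint y _) (hint x _)]
  congr 1; ext z
  rw [pow_add, pow_add, sin_sq, sin_sq]
  ring

theorem besselIntegral_add_two_mul_lt (n : ℕ) {x y : ℝ} (hx : 0 ≤ x) (hxy : x < y) :
    besselIntegral (n + 2) y * besselIntegral n x
      < besselIntegral (n + 2) x * besselIntegral n y := by
  set ν : Measure ℝ := volume.restrict (Ioc 0 π)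
  set K : ℝ × ℝ → ℝ := fun z => (cos z.1 ^ 2 - cos z.2 ^ 2)
    * (cosh (y * cos z.1) * cosh (x * cos z.2) - cosh (x * cos z.1) * cosh (y * cos z.2))
    * (sin z.1 ^ n * sin z.2 ^ n)
  suffices 0 < ∫ z, K z ∂ν.prod ν by linarith [two_mul_besselIntegral_cross n x y]
  have hbox : ν.prod ν = volume.restrict (Ioc 0 π ×ˢ Ioc 0 π) := by
    rw [Measure.prod_restrict, Measure.volume_eq_prod]
  have hK_int : Integrable K (ν.prod ν) := by
    rw [hbox]
    exact ((by fun_prop : Continuous K).continuousOn.integrableOn_compact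
      (isCompact_Icc.prod isCompact_Icc)).mono_set
      (prod_mono Ioc_subset_Icc_self Ioc_subset_Icc_self)
  have hK_nonneg : 0 ≤ᵐ[ν.prod ν] K := by
    rw [hbox]
    filter_upwards [ae_restrict_mem (measurableSet_Ioc.prod measurableSet_Ioc)] with z hz
    have := sin_nonneg_of_nonneg_of_le_pi hz.1.1.le hz.1.2
    have := sin_nonneg_of_nonneg_of_le_pi hz.2.1.le hz.2.2
    exact mul_nonneg (sq_sub_sq_mul_cosh_sub_nonneg hx hxy _ _) (by positivity)
  rw [integral_pos_iff_support_of_nonneg_ae hK_nonneg hK_int]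
  have hpi := pi_pos
  have hrect : Ioo 0 (π / 3) ×ˢ Ioo (π / 3) (π / 2) ⊆ Function.support K := by
    rintro ⟨s, t⟩ hst
    obtain ⟨⟨hs₀, hs₁⟩, ht₀, ht₁⟩ : (0 < s ∧ s < π / 3) ∧ π / 3 < t ∧ t < π / 2 := hst
    have hcos_s : 1 / 2 < cos s := by
      rw [← cos_pi_div_three]
      exact cos_lt_cos_of_nonneg_of_le_pi hs₀.le (by linarith) hs₁
    have hcos_t : cos t < 1 / 2 := by
      rw [← cos_pi_div_three]
      exact cos_lt_cos_of_nonneg_of_le_pi (by linarith) (by linarith) ht₀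
    have hcos_t₀ : 0 < cos t := cos_pos_of_mem_Ioo ⟨by linarith, ht₁⟩
    have hcos : |cos s| ≠ |cos t| := by
      rw [abs_of_pos (by linarith), abs_of_pos hcos_t₀]; linarith
    have := sin_pos_of_pos_of_lt_pi hs₀ (by linarith)
    have := sin_pos_of_pos_of_lt_pi (by linarith : 0 < t) (by linarith)
    exact (mul_pos (sq_sub_sq_mul_cosh_sub_pos hx hxy hcos) (by positivity)).ne'
  refine lt_of_lt_of_le ?_ (measure_mono hrect)
  rw [Measure.prod_prod, Measure.restrict_apply measurableSet_Ioo,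
    Measure.restrict_apply measurableSet_Ioo,
    inter_eq_left.2 (Ioo_subset_Ioc_self.trans (Ioc_subset_Ioc le_rfl (by linarith))),
    inter_eq_left.2 (Ioo_subset_Ioc_self.trans (Ioc_subset_Ioc (by linarith) (by linarith))),
    Real.volume_Ioo, Real.volume_Ioo]
  exact ENNReal.mul_pos (by simp; linarith) (by simp; linarith)

theorem continuous_besselIntegralRatio (n : ℕ) : Continuous (besselIntegralRatio n) :=
  (continuous_besselIntegral _).div (continuous_besselIntegral n)
    fun x => (besselIntegral_pos n x).ne'

theorem besselIntegralRatio_zero (n : ℕ) : besselIntegralRatio n 0 = (n + 1) / (n + 2) := by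
  rw [besselIntegralRatio, besselIntegral_add_two_zero, mul_div_cancel_right₀ _
    (besselIntegral_pos n 0).ne']

theorem besselIntegralRatio_le (n : ℕ) {x : ℝ} (hx : 0 < x) :
    besselIntegralRatio n x ≤ (n + 1) / x := by
  rw [besselIntegralRatio, div_le_div_iff₀ (besselIntegral_pos n x) hx, mul_comm]
  exact mul_besselIntegral_add_two_le n x

theorem strictAntiOn_besselIntegralRatio (n : ℕ) : StrictAntiOn (besselIntegralRatio n) (Ici 0) :=
  fun x hx y _ hxy => (div_lt_div_iff₀ (besselIntegral_pos n y) (besselIntegral_pos n x)).2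
    (besselIntegral_add_two_mul_lt n hx hxy)

theorem besselRatio_add_two (n : ℕ) (x : ℝ) :
    besselRatio (n + 2) x = x / (n + 1) * besselIntegralRatio n x := by
  rw [besselRatio, besselIntegralRatio, besselIntegral, besselIntegral, Nat.add_sub_cancel]
  push_cast
  ring

theorem eq_mul_besselRatio_add_two_iff (n : ℕ) {x β : ℝ} (hx : 0 < x) (hβ : 0 < β) :
    x = β * besselRatio (n + 2) x ↔ besselIntegralRatio n x = (n + 1) / β := by
  rw [besselRatio_add_two, eq_div_iff hβ.ne', eq_comm,
    show β * (x / (n + 1) * besselIntegralRatio n x)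
      = x * (besselIntegralRatio n x * β / (n + 1)) by ring,
    mul_eq_left₀ hx.ne', div_eq_one_iff_eq (by positivity)]

/-- For `N ≥ 2` and `β > N` there is a unique strictly positive solution of `x = β f(x)`. -/
theorem unique_positive_fixed_point (N : ℕ) (hN : 2 ≤ N) (β : ℝ) (hβ : (N : ℝ) < β) :
    ∃! x : ℝ, 0 < x ∧ x = β * besselRatio N x := by
  obtain ⟨n, rfl⟩ := Nat.exists_eq_add_of_le' hN
  push_cast at hβ
  have hβ₀ : 0 < β := by linarith
  have hq₀ : (n + 1) / β < besselIntegralRatio n 0 := by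
    rw [besselIntegralRatio_zero]
    gcongr
  have hq_large : besselIntegralRatio n (2 * β) < (n + 1) / β :=
    (besselIntegralRatio_le n (by positivity)).trans_lt (by gcongr; linarith)
  obtain ⟨ξ, hξ, hqξ⟩ := intermediate_value_Icc' (by positivity)
    (continuous_besselIntegralRatio n).continuousOn ⟨hq_large.le, hq₀.le⟩
  have hξ₀ : 0 < ξ := hξ.1.lt_of_ne (by rintro rfl; exact hq₀.ne' hqξ)
  refine ⟨ξ, ⟨hξ₀, (eq_mul_besselRatio_add_two_iff n hξ₀ hβ₀).2 hqξ⟩, ?_⟩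
  rintro y ⟨hy, hy_fixed⟩
  exact (strictAntiOn_besselIntegralRatio n).injOn hy.le hξ₀.le
    (((eq_mul_besselRatio_add_two_iff n hy hβ₀).1 hy_fixed).trans hqξ.symm)

end
end

section
/- The function x ↦ f(x)/x satisfies lim_{x→0⁺} f(x)/x = 1/N and lim_{x→∞} f(x)/x = 0. -/
open MeasureTheory Real Filter

noncomputable section

/-!
Write `J k x = ∫₀^π e^{x cos θ} sin^k θ dθ` and `K k x = ∫₀^π e^{x cos θ} sin^k θ cos θ dθ`.
Integrating `θ ↦ e^{x cos θ} sin^{k+1} θ` by parts gives `x J (k+2) x = (k+1) K k x`, so that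
`f = K (N-2) / J (N-2)`; since `|cos| ≤ 1` this gives `|f| ≤ 1`, whence `f(x)/x → 0` at infinity.
At the origin, `f(x)/x = J N x / ((N-1) J (N-2) x)` is continuous, with value `1/N` by the Wallis
recursion `J (k+2) 0 = (k+1)/(k+2) J k 0`.
-/

def expCosSinPowIntegral (k : ℕ) (x : ℝ) : ℝ :=
  ∫ θ in (0:ℝ)..π, exp (x * cos θ) * sin θ ^ k

def expCosSinPowCosIntegral (k : ℕ) (x : ℝ) : ℝ :=
  ∫ θ in (0:ℝ)..π, exp (x * cos θ) * sin θ ^ k * cos θ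

local notation "J" => expCosSinPowIntegral
local notation "K" => expCosSinPowCosIntegral

theorem continuous_expCosSinPowIntegral (k : ℕ) : Continuous (J k) :=
  intervalIntegral.continuous_parametric_intervalIntegral_of_continuous' (by fun_prop) _ _

theorem expCosSinPowIntegral_pos (k : ℕ) (x : ℝ) : 0 < J k x := by
  refine intervalIntegral.intervalIntegral_pos_of_pos_on
    (Continuous.intervalIntegrable (by fun_prop) _ _) (fun θ hθ => ?_) pi_pos
  exact mul_pos (exp_pos _) (pow_pos (sin_pos_of_pos_of_lt_pi hθ.1 hθ.2) k)

theorem expCosSinPowIntegral_add_two_zero (k : ℕ) :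
    J (k + 2) 0 = (k + 1) / (k + 2) * J k 0 := by
  simp only [expCosSinPowIntegral, zero_mul, exp_zero, one_mul]
  rw [integral_sin_pow, sin_zero, sin_pi, zero_pow k.succ_ne_zero]
  simp

theorem abs_expCosSinPowCosIntegral_le (k : ℕ) (x : ℝ) : |K k x| ≤ J k x := by
  refine (intervalIntegral.abs_integral_le_integral_abs pi_pos.le).trans
    (intervalIntegral.integral_mono_on pi_pos.le (Continuous.intervalIntegrable (by fun_prop) _ _)
      (Continuous.intervalIntegrable (by fun_prop) _ _) fun θ hθ => ?_)
  have hw : 0 ≤ exp (x * cos θ) * sin θ ^ k :=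
    mul_nonneg (exp_pos _).le (pow_nonneg (sin_nonneg_of_nonneg_of_le_pi hθ.1 hθ.2) k)
  rw [abs_mul, abs_of_nonneg hw]
  exact mul_le_of_le_one_right hw (abs_cos_le_one θ)

theorem mul_expCosSinPowIntegral_add_two (k : ℕ) (x : ℝ) :
    x * J (k + 2) x = (k + 1) * K k x := by
  have hderiv : ∀ θ, HasDerivAt (fun θ => -(exp (x * cos θ) * sin θ ^ (k + 1)))
      (x * (exp (x * cos θ) * sin θ ^ (k + 2)) - (k + 1) * (exp (x * cos θ) * sin θ ^ k * cos θ))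
      θ := by
    intro θ
    refine (((hasDerivAt_cos θ).const_mul x).exp.fun_mul
      ((hasDerivAt_sin θ).fun_pow (k + 1))).fun_neg.congr_deriv ?_
    push_cast
    ring
  have hibp := intervalIntegral.integral_eq_sub_of_hasDerivAt (a := 0) (b := π)
    (fun θ _ => hderiv θ) (Continuous.intervalIntegrable (by fun_prop) _ _)
  rw [intervalIntegral.integral_sub (Continuous.intervalIntegrable (by fun_prop) _ _)
      (Continuous.intervalIntegrable (by fun_prop) _ _),
    intervalIntegral.integral_const_mul, intervalIntegral.integral_const_mul,
    sin_pi, sin_zero, zero_pow k.succ_ne_zero] at hibp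
  simp only [mul_zero, neg_zero, sub_zero] at hibp
  exact sub_eq_zero.mp hibp

theorem natCast_add_two_sub_one (k : ℕ) : ((k + 2 : ℕ) : ℝ) - 1 = k + 1 := by
  push_cast
  ring

theorem besselRatio_add_two_s1 (k : ℕ) (x : ℝ) : besselRatio (k + 2) x = K k x / J k x := by
  rw [besselRatio, Nat.add_sub_cancel, ← expCosSinPowIntegral, ← expCosSinPowIntegral,
    natCast_add_two_sub_one, div_mul_eq_mul_div, mul_expCosSinPowIntegral_add_two,
    mul_div_cancel_left₀ _ (by positivity)]

theorem abs_besselRatio_le_one (N : ℕ) (hN : 2 ≤ N) (x : ℝ) : |besselRatio N x| ≤ 1 := by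
  obtain ⟨k, rfl⟩ := Nat.exists_eq_add_of_le' hN
  rw [besselRatio_add_two_s1, abs_div, abs_of_pos (expCosSinPowIntegral_pos k x)]
  exact div_le_one_of_le₀ (abs_expCosSinPowCosIntegral_le k x) (expCosSinPowIntegral_pos k x).le

theorem besselRatio_add_two_div_self (k : ℕ) {x : ℝ} (hx : x ≠ 0) :
    besselRatio (k + 2) x / x = J (k + 2) x / ((k + 1) * J k x) := by
  have hJ := (expCosSinPowIntegral_pos k x).ne'
  rw [besselRatio, Nat.add_sub_cancel, ← expCosSinPowIntegral, ← expCosSinPowIntegral,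
    natCast_add_two_sub_one]
  field_simp

theorem tendsto_besselRatio_div_self_nhdsGT_zero (N : ℕ) (hN : 2 ≤ N) :
    Tendsto (fun x => besselRatio N x / x) (nhdsWithin 0 (Set.Ioi 0)) (nhds (1 / N)) := by
  obtain ⟨k, rfl⟩ := Nat.exists_eq_add_of_le' hN
  have hJ0 := (expCosSinPowIntegral_pos k 0).ne'
  have hval : J (k + 2) 0 / ((k + 1) * J k 0) = 1 / ((k + 2 : ℕ) : ℝ) := by
    rw [expCosSinPowIntegral_add_two_zero]
    push_cast
    field_simp
  have hcont : Tendsto (fun x => J (k + 2) x / ((k + 1) * J k x)) (nhds 0)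
      (nhds (1 / ((k + 2 : ℕ) : ℝ))) :=
    hval ▸ ((continuous_expCosSinPowIntegral _).tendsto 0).div
      (((continuous_expCosSinPowIntegral k).tendsto 0).const_mul _) (by positivity)
  refine (hcont.mono_left nhdsWithin_le_nhds).congr' ?_
  filter_upwards [self_mem_nhdsWithin] with x hx
  exact (besselRatio_add_two_div_self k (ne_of_gt hx)).symm

theorem tendsto_besselRatio_div_self_atTop (N : ℕ) (hN : 2 ≤ N) :
    Tendsto (fun x => besselRatio N x / x) atTop (nhds 0) := by
  refine squeeze_zero_norm' ?_ tendsto_inv_atTop_zero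
  filter_upwards [eventually_gt_atTop 0] with x hx
  rw [norm_div, norm_of_nonneg hx.le]
  exact div_le_div_of_nonneg_right (abs_besselRatio_le_one N hN x) hx.le |>.trans_eq (one_div x)

/-- `f(x)/x → 1/N` as `x → 0⁺` and `f(x)/x → 0` as `x → ∞`. -/
theorem besselRatio_div_limits (N : ℕ) (hN : 2 ≤ N) :
    Tendsto (fun x => besselRatio N x / x) (nhdsWithin 0 (Set.Ioi 0))
        (nhds (1 / (N : ℝ))) ∧
      Tendsto (fun x => besselRatio N x / x) atTop (nhds 0) :=
  ⟨tendsto_besselRatio_div_self_nhdsGT_zero N hN, tendsto_besselRatio_div_self_atTop N hN⟩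

end
end

section
/- For every x > 0, one has 0 < f′(x) < 1/(N−1) ≤ 1, where f′ denotes the derivative of f. -/
/-!
Write `B(y) = ∫₀^π e^{y cos θ} sin^{N-2} θ dθ` and `C = B'`, `D = C'`. Integrating by parts,
`(N-1) C(y) = y ∫₀^π e^{y cos θ} sin^N θ dθ`, so `f = C/B` and `f' = (D B - C²)/B²` is the
variance of `cos θ` under the probability density `e^{y cos θ} sin^{N-2} θ / B(y)`: it is positive.

For the upper bound, a second integration by parts gives `(N-1) f' = A/B + y G/B²`, where
`A = ∫ e^{y cos θ} sin^N θ = B - D < B`, `K = A'` and `G = K B - A C`. The cross term `G`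
vanishes at `y = 0`, where the odd moments of `cos θ` vanish, and `G' = D² - B Q ≤ 0` by
Cauchy–Schwarz (`Q = D''`), so `y G(y) ≤ 0`.
-/

open MeasureTheory Real

noncomputable section

open Set

def expCosIntegral (φ : ℝ → ℝ) (y : ℝ) : ℝ :=
  ∫ θ in (0:ℝ)..π, exp (y * cos θ) * φ θ

section expCosIntegral

variable {φ ψ : ℝ → ℝ}

theorem intervalIntegrable_exp_mul_cos_mul (hφ : Continuous φ) (y a b : ℝ) :
    IntervalIntegrable (fun θ => exp (y * cos θ) * φ θ) volume a b :=
  (by fun_prop : Continuous fun θ => exp (y * cos θ) * φ θ).intervalIntegrable a b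

theorem expCosIntegral_add (hφ : Continuous φ) (hψ : Continuous ψ) (y : ℝ) :
    expCosIntegral (fun θ => φ θ + ψ θ) y = expCosIntegral φ y + expCosIntegral ψ y := by
  simp only [expCosIntegral, mul_add]
  exact intervalIntegral.integral_add (intervalIntegrable_exp_mul_cos_mul hφ y 0 π)
    (intervalIntegrable_exp_mul_cos_mul hψ y 0 π)

theorem expCosIntegral_sub (hφ : Continuous φ) (hψ : Continuous ψ) (y : ℝ) :
    expCosIntegral (fun θ => φ θ - ψ θ) y = expCosIntegral φ y - expCosIntegral ψ y := by
  simp only [expCosIntegral, mul_sub]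
  exact intervalIntegral.integral_sub (intervalIntegrable_exp_mul_cos_mul hφ y 0 π)
    (intervalIntegrable_exp_mul_cos_mul hψ y 0 π)

theorem expCosIntegral_const_mul (c : ℝ) (φ : ℝ → ℝ) (y : ℝ) :
    expCosIntegral (fun θ => c * φ θ) y = c * expCosIntegral φ y := by
  simp only [expCosIntegral, mul_left_comm _ c, intervalIntegral.integral_const_mul]

theorem expCosIntegral_nonneg (hφ : ∀ θ ∈ Icc 0 π, 0 ≤ φ θ) (y : ℝ) :
    0 ≤ expCosIntegral φ y :=
  intervalIntegral.integral_nonneg pi_pos.le fun θ hθ => mul_nonneg (exp_pos _).le (hφ θ hθ)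

theorem expCosIntegral_pos (hφ : Continuous φ) (hφ_nonneg : ∀ θ ∈ Ioc 0 π, 0 ≤ φ θ)
    (hφ_pos : ∃ θ ∈ Icc 0 π, 0 < φ θ) (y : ℝ) : 0 < expCosIntegral φ y := by
  obtain ⟨θ₀, hθ₀, hpos⟩ := hφ_pos
  exact intervalIntegral.integral_pos pi_pos (by fun_prop)
    (fun θ hθ => mul_nonneg (exp_pos _).le (hφ_nonneg θ hθ)) ⟨θ₀, hθ₀, by positivity⟩

theorem hasDerivAt_expCosIntegral (hφ : Continuous φ) (y : ℝ) :
    HasDerivAt (expCosIntegral φ) (expCosIntegral (fun θ => cos θ * φ θ) y) y := by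
  refine (intervalIntegral.hasDerivAt_integral_of_dominated_loc_of_deriv_le
    (F' := fun x θ => exp (x * cos θ) * (cos θ * φ θ)) (bound := fun θ => exp (|y| + 1) * |φ θ|)
    (Metric.ball_mem_nhds y one_pos) (.of_forall fun x => by fun_prop)
    (intervalIntegrable_exp_mul_cos_mul hφ y 0 π) (by fun_prop) ?_
    ((by fun_prop : Continuous fun θ => exp (|y| + 1) * |φ θ|).intervalIntegrable _ _) ?_).2
  · refine .of_forall fun θ _ x hxy => ?_
    have hx : x * cos θ ≤ |y| + 1 := calc
      x * cos θ ≤ |x| * |cos θ| := (le_abs_self _).trans (abs_mul _ _).le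
      _ ≤ |x| := mul_le_of_le_one_right (abs_nonneg _) (abs_cos_le_one θ)
      _ ≤ |y| + 1 := by
        have := abs_sub_abs_le_abs_sub x y
        rw [Metric.mem_ball, dist_eq] at hxy
        linarith
    rw [norm_mul, norm_mul, norm_of_nonneg (exp_pos _).le, norm_eq_abs, norm_eq_abs]
    gcongr
    exact mul_le_of_le_one_left (abs_nonneg _) (abs_cos_le_one θ)
  · exact .of_forall fun θ _ x _ =>
      (((hasDerivAt_mul_const (cos θ)).exp).mul_const (φ θ)).congr_deriv (by ring)

/-- Integration by parts; the `θ`-derivative of `e^{y cos θ}` is `-y sin θ e^{y cos θ}`. -/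
theorem expCosIntegral_eq_mul_of_hasDerivAt {Ψ : ℝ → ℝ} (hΨ : ∀ θ, HasDerivAt Ψ (ψ θ) θ)
    (hψ : Continuous ψ) (hΨ₀ : Ψ 0 = 0) (hΨπ : Ψ π = 0) (y : ℝ) :
    expCosIntegral ψ y = y * expCosIntegral (fun θ => sin θ * Ψ θ) y := by
  have hΨc : Continuous Ψ := continuous_iff_continuousAt.2 fun θ => (hΨ θ).continuousAt
  have hderiv : ∀ θ ∈ uIcc 0 π, HasDerivAt (fun θ => exp (y * cos θ) * Ψ θ)
      (exp (y * cos θ) * ψ θ - y * (exp (y * cos θ) * (sin θ * Ψ θ))) θ := by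
    intro θ _
    exact ((((hasDerivAt_cos θ).const_mul y).exp).mul (hΨ θ)).congr_deriv (by ring)
  have h := intervalIntegral.integral_eq_sub_of_hasDerivAt hderiv
    ((intervalIntegrable_exp_mul_cos_mul hψ y 0 π).sub
      ((intervalIntegrable_exp_mul_cos_mul (by fun_prop) y 0 π).const_mul y))
  rw [intervalIntegral.integral_sub (intervalIntegrable_exp_mul_cos_mul hψ y 0 π)
    ((intervalIntegrable_exp_mul_cos_mul (by fun_prop) y 0 π).const_mul y),
    intervalIntegral.integral_const_mul] at h
  simp only [hΨ₀, hΨπ, mul_zero, sub_zero] at h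
  exact sub_eq_zero.1 h

end expCosIntegral

def cosSinMoment (k n : ℕ) (y : ℝ) : ℝ :=
  expCosIntegral (fun θ => cos θ ^ k * sin θ ^ n) y

section cosSinMoment

variable (k n : ℕ) (y : ℝ)

theorem hasDerivAt_cosSinMoment :
    HasDerivAt (cosSinMoment k n) (cosSinMoment (k + 1) n y) y := by
  have h := hasDerivAt_expCosIntegral (φ := fun θ => cos θ ^ k * sin θ ^ n) (by fun_prop) y
  rwa [show (fun θ => cos θ * (cos θ ^ k * sin θ ^ n)) = fun θ => cos θ ^ (k + 1) * sin θ ^ n by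
    ext; ring] at h

theorem cosSinMoment_add_two :
    cosSinMoment k (n + 2) y = cosSinMoment k n y - cosSinMoment (k + 2) n y := by
  rw [cosSinMoment, cosSinMoment, cosSinMoment, ← expCosIntegral_sub (by fun_prop) (by fun_prop)]
  congr 1
  ext θ
  rw [pow_add, sin_sq]
  ring

/-- For `k = 0` the truncated `k - 1` is harmless, its coefficient being `0`. -/
theorem cosSinMoment_recurrence :
    (n + 1) * cosSinMoment (k + 1) n y =
      k * cosSinMoment (k - 1) (n + 2) y + y * cosSinMoment k (n + 2) y := by
  have hΨ : ∀ θ, HasDerivAt (fun θ => cos θ ^ k * sin θ ^ (n + 1))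
      ((n + 1) * (cos θ ^ (k + 1) * sin θ ^ n) - k * (cos θ ^ (k - 1) * sin θ ^ (n + 2))) θ := by
    intro θ
    refine (((hasDerivAt_cos θ).pow k).mul ((hasDerivAt_sin θ).pow (n + 1))).congr_deriv ?_
    simp only [Pi.pow_apply]
    push_cast
    ring
  have h := expCosIntegral_eq_mul_of_hasDerivAt hΨ (by fun_prop) (by simp) (by simp) y
  rw [expCosIntegral_sub (by fun_prop) (by fun_prop), expCosIntegral_const_mul,
    expCosIntegral_const_mul] at h
  rw [show (fun θ => sin θ * (cos θ ^ k * sin θ ^ (n + 1))) = fun θ => cos θ ^ k * sin θ ^ (n + 2)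
    by ext; ring] at h
  simp only [cosSinMoment]
  linarith

theorem cosSinMoment_one_zero : cosSinMoment 1 n 0 = 0 := by
  have h := cosSinMoment_recurrence 0 n 0
  simp only [CharP.cast_eq_zero, zero_mul, add_zero] at h
  exact (mul_eq_zero.1 h).resolve_left (by positivity)

theorem cosSinMoment_two_mul_pos (j : ℕ) : 0 < cosSinMoment (2 * j) n y := by
  refine expCosIntegral_pos (by fun_prop) (fun θ hθ => ?_) ⟨π / 3, ?_, ?_⟩ y
  · rw [pow_mul]
    exact mul_nonneg (by positivity) (pow_nonneg (sin_nonneg_of_nonneg_of_le_pi hθ.1.le hθ.2) n)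
  · constructor <;> linarith [pi_pos]
  · rw [cos_pi_div_three]
    have : 0 < sin (π / 3) := sin_pos_of_pos_of_lt_pi (by positivity) (by linarith [pi_pos])
    positivity

theorem expCosIntegral_cos_pow_sub_sq_mul_sin_pow (j : ℕ) (t : ℝ) :
    expCosIntegral (fun θ => (cos θ ^ j - t) ^ 2 * sin θ ^ n) y =
      cosSinMoment 0 n y * (t * t) + -2 * cosSinMoment j n y * t + cosSinMoment (2 * j) n y := by
  have h : (fun θ => (cos θ ^ j - t) ^ 2 * sin θ ^ n) = fun θ =>
      (t * t) * (cos θ ^ 0 * sin θ ^ n) + (-2 * t) * (cos θ ^ j * sin θ ^ n) +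
        cos θ ^ (2 * j) * sin θ ^ n := by
    ext θ; ring
  rw [h, expCosIntegral_add (by fun_prop) (by fun_prop),
    expCosIntegral_add (by fun_prop) (by fun_prop), expCosIntegral_const_mul,
    expCosIntegral_const_mul]
  simp only [cosSinMoment]
  ring

theorem sq_cosSinMoment_one_lt :
    cosSinMoment 1 n y ^ 2 < cosSinMoment 0 n y * cosSinMoment 2 n y := by
  have h := discrim_lt_zero (cosSinMoment_two_mul_pos n y 0).ne' fun t => by
    rw [← expCosIntegral_cos_pow_sub_sq_mul_sin_pow n y 1 t]
    refine expCosIntegral_pos (by fun_prop) (fun θ hθ => mul_nonneg (sq_nonneg _)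
      (pow_nonneg (sin_nonneg_of_nonneg_of_le_pi hθ.1.le hθ.2) n)) ?_ y
    -- `cos θ - t` cannot vanish both at `π / 2` and at `π / 3`
    by_cases ht : t = 0
    · refine ⟨π / 3, ⟨by positivity, by linarith [pi_pos]⟩, ?_⟩
      have : 0 < sin (π / 3) := sin_pos_of_pos_of_lt_pi (by positivity) (by linarith [pi_pos])
      rw [ht, pow_one, cos_pi_div_three]
      positivity
    · refine ⟨π / 2, ⟨by positivity, by linarith [pi_pos]⟩, ?_⟩
      rw [pow_one, cos_pi_div_two, sin_pi_div_two, one_pow, mul_one]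
      exact pow_two_pos_of_ne_zero (by simpa using ht)
  rw [discrim] at h
  linarith

theorem sq_cosSinMoment_two_le :
    cosSinMoment 2 n y ^ 2 ≤ cosSinMoment 0 n y * cosSinMoment 4 n y := by
  have h := discrim_le_zero fun t => by
    rw [← expCosIntegral_cos_pow_sub_sq_mul_sin_pow n y 2 t]
    exact expCosIntegral_nonneg (fun θ hθ => mul_nonneg (sq_nonneg _)
      (pow_nonneg (sin_nonneg_of_nonneg_of_le_pi hθ.1 hθ.2) n)) y
  rw [discrim] at h
  linarith

theorem mul_cosSinMoment_cross_nonpos :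
    y * (cosSinMoment 1 (n + 2) y * cosSinMoment 0 n y
      - cosSinMoment 0 (n + 2) y * cosSinMoment 1 n y) ≤ 0 := by
  set G : ℝ → ℝ := fun z => cosSinMoment 1 (n + 2) z * cosSinMoment 0 n z
      - cosSinMoment 0 (n + 2) z * cosSinMoment 1 n z
  have hG : ∀ z, HasDerivAt G (cosSinMoment 2 (n + 2) z * cosSinMoment 0 n z
      - cosSinMoment 0 (n + 2) z * cosSinMoment 2 n z) z := fun z =>
    (((hasDerivAt_cosSinMoment 1 (n + 2) z).mul (hasDerivAt_cosSinMoment 0 n z)).sub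
      ((hasDerivAt_cosSinMoment 0 (n + 2) z).mul (hasDerivAt_cosSinMoment 1 n z))).congr_deriv
      (by ring)
  have hG_anti : Antitone G := antitone_of_hasDerivAt_nonpos hG fun z => by
    rw [Pi.zero_apply, cosSinMoment_add_two, cosSinMoment_add_two]
    linarith [sq_cosSinMoment_two_le n z]
  have hG₀ : G 0 = 0 := by simp only [G, cosSinMoment_one_zero, zero_mul, mul_zero, sub_zero]
  rcases le_total y 0 with hy | hy
  · exact mul_nonpos_of_nonpos_of_nonneg hy (hG₀ ▸ hG_anti hy)
  · exact mul_nonpos_of_nonneg_of_nonpos hy (hG₀ ▸ hG_anti hy)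

theorem cosSinMoment_variance_lt :
    (n + 1) * (cosSinMoment 2 n y * cosSinMoment 0 n y - cosSinMoment 1 n y ^ 2) <
      cosSinMoment 0 n y ^ 2 := by
  have hC := cosSinMoment_recurrence 0 n y
  have hD := cosSinMoment_recurrence 1 n y
  simp only [Nat.cast_zero, Nat.cast_one, zero_mul, one_mul, zero_add, Nat.reduceAdd,
    Nat.sub_self] at hC hD
  have hB := cosSinMoment_two_mul_pos n y 0
  have hD_pos := cosSinMoment_two_mul_pos n y 1
  calc (n + 1) * (cosSinMoment 2 n y * cosSinMoment 0 n y - cosSinMoment 1 n y ^ 2)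
      = cosSinMoment 0 n y * cosSinMoment 0 (n + 2) y + y * (cosSinMoment 1 (n + 2) y *
          cosSinMoment 0 n y - cosSinMoment 0 (n + 2) y * cosSinMoment 1 n y) := by
        linear_combination cosSinMoment 0 n y * hD - cosSinMoment 1 n y * hC
    _ ≤ cosSinMoment 0 n y * cosSinMoment 0 (n + 2) y := by
        linarith [mul_cosSinMoment_cross_nonpos n y]
    _ < cosSinMoment 0 n y ^ 2 := by
        rw [cosSinMoment_add_two]
        nlinarith

end cosSinMoment

theorem besselRatio_add_two_s13 (n : ℕ) :
    besselRatio (n + 2) = fun y => cosSinMoment 1 n y / cosSinMoment 0 n y := by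
  ext y
  have h := cosSinMoment_recurrence 0 n y
  simp only [Nat.cast_zero, zero_mul, zero_add] at h
  have hB := cosSinMoment_two_mul_pos n y 0
  have hM₀ (m : ℕ) : (∫ θ in (0:ℝ)..π, exp (y * cos θ) * sin θ ^ m) = cosSinMoment 0 m y := by
    simp only [cosSinMoment, expCosIntegral, pow_zero, one_mul]
  rw [besselRatio, Nat.add_sub_cancel, hM₀, hM₀, div_left_inj' hB.ne']
  push_cast
  rw [show (n : ℝ) + 2 - 1 = n + 1 by ring, div_mul_eq_mul_div, div_eq_iff (by positivity)]
  linarith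

theorem hasDerivAt_besselRatio_add_two (n : ℕ) (x : ℝ) :
    HasDerivAt (besselRatio (n + 2))
      ((cosSinMoment 2 n x * cosSinMoment 0 n x - cosSinMoment 1 n x ^ 2) /
        cosSinMoment 0 n x ^ 2) x := by
  rw [besselRatio_add_two_s13]
  exact ((hasDerivAt_cosSinMoment 1 n x).div (hasDerivAt_cosSinMoment 0 n x)
    (cosSinMoment_two_mul_pos n x 0).ne').congr_deriv (by ring)

theorem besselRatio_deriv_bounds_general (N : ℕ) (hN : 2 ≤ N) (x : ℝ) :
    0 < deriv (besselRatio N) x ∧ deriv (besselRatio N) x < 1 / ((N : ℝ) - 1) ∧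
      1 / ((N : ℝ) - 1) ≤ 1 := by
  obtain ⟨n, rfl⟩ := Nat.exists_eq_add_of_le' hN
  have hN₁ : ((n + 2 : ℕ) : ℝ) - 1 = n + 1 := by push_cast; ring
  have hB := cosSinMoment_two_mul_pos n x 0
  rw [(hasDerivAt_besselRatio_add_two n x).deriv, hN₁]
  refine ⟨div_pos (by linarith [sq_cosSinMoment_one_lt n x]) (by positivity), ?_, ?_⟩
  · rw [div_lt_div_iff₀ (by positivity) (by positivity)]
    linarith [cosSinMoment_variance_lt n x]
  · rw [div_le_one (by positivity)]
    linarith [n.cast_nonneg (α := ℝ)]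

/-- For every `x > 0`, `0 < f'(x) < 1/(N-1) ≤ 1`. -/
theorem besselRatio_deriv_bounds (N : ℕ) (hN : 2 ≤ N) (x : ℝ) (hx : 0 < x) :
    0 < deriv (besselRatio N) x ∧ deriv (besselRatio N) x < 1 / ((N : ℝ) - 1) ∧
      1 / ((N : ℝ) - 1) ≤ 1 :=
  besselRatio_deriv_bounds_general N hN x

end
end

section
/- For every x > 0, one has 0 < f(x)/x < 1/(N−1) and f(x)² < 1. -/
open MeasureTheory Real

noncomputable section

/-!
With the weight `w(θ) = e^{x cos θ} sin^{N-2} θ`, nonnegative on `[0, π]`, one has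
`f(x) / x = ∫ w sin² / ((N - 1) ∫ w)`, so the first two bounds amount to `0 < ∫ w sin² < ∫ w`.
Integrating `(e^{x cos θ} sin^{N-1} θ)'` over `[0, π]` gives `x ∫ w sin² = (N - 1) ∫ w cos`, hence
`f(x) = ∫ w cos / ∫ w`, and `f(x)² < 1` follows from `0 < ∫ w cos < ∫ w`: positivity comes from
`x > 0` through the identity, the upper bound from `cos < 1`.
-/

section

variable (x : ℝ) (m : ℕ)

theorem continuous_exp_mul_cos_mul_sin_pow :
    Continuous fun θ => exp (x * cos θ) * sin θ ^ m := by
  fun_prop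

theorem integral_exp_mul_cos_mul_sin_pow_pos :
    0 < ∫ θ in (0:ℝ)..π, exp (x * cos θ) * sin θ ^ m := by
  refine intervalIntegral.intervalIntegral_pos_of_pos_on
    ((continuous_exp_mul_cos_mul_sin_pow x m).intervalIntegrable 0 π) (fun θ hθ => ?_) pi_pos
  have := sin_pos_of_pos_of_lt_pi hθ.1 hθ.2
  positivity

theorem integral_exp_mul_cos_mul_sin_pow_mul_lt {g : ℝ → ℝ} (hg : Continuous g)
    (hg_le : ∀ θ, g θ ≤ 1) {c : ℝ} (hc : c ∈ Set.Ioo 0 π) (hgc : g c < 1) :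
    ∫ θ in (0:ℝ)..π, exp (x * cos θ) * sin θ ^ m * g θ
      < ∫ θ in (0:ℝ)..π, exp (x * cos θ) * sin θ ^ m := by
  have hw := continuous_exp_mul_cos_mul_sin_pow x m
  refine intervalIntegral.integral_lt_integral_of_continuousOn_of_le_of_exists_lt pi_pos
    (hw.mul hg).continuousOn hw.continuousOn (fun θ hθ => ?_) ⟨c, Set.Ioo_subset_Icc_self hc, ?_⟩
  · have := sin_nonneg_of_nonneg_of_le_pi hθ.1.le hθ.2
    exact mul_le_of_le_one_right (by positivity) (hg_le θ)
  · have := sin_pos_of_pos_of_lt_pi hc.1 hc.2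
    exact mul_lt_of_lt_one_right (by positivity) hgc

theorem integral_exp_mul_cos_mul_sin_pow_mul_cos_lt :
    ∫ θ in (0:ℝ)..π, exp (x * cos θ) * sin θ ^ m * cos θ
      < ∫ θ in (0:ℝ)..π, exp (x * cos θ) * sin θ ^ m :=
  integral_exp_mul_cos_mul_sin_pow_mul_lt x m continuous_cos cos_le_one (c := π / 2)
    ⟨by positivity, by linarith [pi_pos]⟩ (by simp)

theorem integral_exp_mul_cos_mul_sin_pow_add_two_lt :
    ∫ θ in (0:ℝ)..π, exp (x * cos θ) * sin θ ^ (m + 2)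
      < ∫ θ in (0:ℝ)..π, exp (x * cos θ) * sin θ ^ m := by
  simp only [pow_add, ← mul_assoc]
  refine integral_exp_mul_cos_mul_sin_pow_mul_lt x m (by fun_prop) (fun θ => ?_)
    (c := π / 4) ⟨by positivity, by linarith [pi_pos]⟩ ?_
  · rw [sq_le_one_iff_abs_le_one]
    exact abs_sin_le_one θ
  · rw [sin_pi_div_four, div_pow, sq_sqrt zero_le_two]
    norm_num

theorem mul_integral_exp_mul_cos_mul_sin_pow_add_two :
    x * ∫ θ in (0:ℝ)..π, exp (x * cos θ) * sin θ ^ (m + 2)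
      = (m + 1) * ∫ θ in (0:ℝ)..π, exp (x * cos θ) * sin θ ^ m * cos θ := by
  have hderiv : ∀ θ ∈ Set.uIcc (0:ℝ) π,
      HasDerivAt (fun θ => exp (x * cos θ) * sin θ ^ (m + 1))
        ((m + 1) * (exp (x * cos θ) * sin θ ^ m * cos θ)
          - x * (exp (x * cos θ) * sin θ ^ (m + 2))) θ := by
    intro θ _
    have hexp := ((hasDerivAt_cos θ).const_mul x).exp
    have hsin := (hasDerivAt_sin θ).fun_pow (m + 1)
    refine (hexp.fun_mul hsin).congr_deriv ?_
    rw [Nat.add_sub_cancel]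
    push_cast
    ring
  have hint : IntervalIntegrable (fun θ => (m + 1) * (exp (x * cos θ) * sin θ ^ m * cos θ)
      - x * (exp (x * cos θ) * sin θ ^ (m + 2))) volume 0 π :=
    Continuous.intervalIntegrable (by fun_prop) 0 π
  have hFTC := intervalIntegral.integral_eq_sub_of_hasDerivAt hderiv hint
  rw [intervalIntegral.integral_sub (Continuous.intervalIntegrable (by fun_prop) 0 π)
      (Continuous.intervalIntegrable (by fun_prop) 0 π),
    intervalIntegral.integral_const_mul, intervalIntegral.integral_const_mul] at hFTC
  simp only [sin_pi, sin_zero, zero_pow (Nat.succ_ne_zero m), mul_zero, sub_self] at hFTC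
  linarith

end

theorem besselRatio_add_two_s17 (x : ℝ) (m : ℕ) :
    besselRatio (m + 2) x = x / (m + 1) * (∫ θ in (0:ℝ)..π, exp (x * cos θ) * sin θ ^ (m + 2))
      / ∫ θ in (0:ℝ)..π, exp (x * cos θ) * sin θ ^ m := by
  rw [besselRatio, Nat.add_sub_cancel]
  push_cast
  ring

theorem besselRatio_add_two_eq_div (x : ℝ) (m : ℕ) :
    besselRatio (m + 2) x = (∫ θ in (0:ℝ)..π, exp (x * cos θ) * sin θ ^ m * cos θ)
      / ∫ θ in (0:ℝ)..π, exp (x * cos θ) * sin θ ^ m := by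
  rw [besselRatio_add_two_s17, div_mul_eq_mul_div, mul_integral_exp_mul_cos_mul_sin_pow_add_two,
    mul_div_cancel_left₀ _ (by positivity)]

/-- For every `x > 0`, `0 < f(x)/x < 1/(N-1)` and `f(x)² < 1`. -/
theorem besselRatio_div_bounds (N : ℕ) (hN : 2 ≤ N) (x : ℝ) (hx : 0 < x) :
    0 < besselRatio N x / x ∧ besselRatio N x / x < 1 / ((N : ℝ) - 1) ∧
      besselRatio N x ^ 2 < 1 := by
  obtain ⟨m, rfl⟩ : ∃ m, N = m + 2 := ⟨N - 2, by omega⟩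
  have hN1 : ((m + 2 : ℕ) : ℝ) - 1 = m + 1 := by push_cast; ring
  have hf := besselRatio_add_two_s17 x m
  have hf' := besselRatio_add_two_eq_div x m
  set A := ∫ θ in (0:ℝ)..π, exp (x * cos θ) * sin θ ^ (m + 2)
  set B := ∫ θ in (0:ℝ)..π, exp (x * cos θ) * sin θ ^ m
  set C := ∫ θ in (0:ℝ)..π, exp (x * cos θ) * sin θ ^ m * cos θ
  have hA : 0 < A := integral_exp_mul_cos_mul_sin_pow_pos x (m + 2)
  have hB : 0 < B := integral_exp_mul_cos_mul_sin_pow_pos x m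
  have hAB : A < B := integral_exp_mul_cos_mul_sin_pow_add_two_lt x m
  have hCB : C < B := integral_exp_mul_cos_mul_sin_pow_mul_cos_lt x m
  have hC : 0 < C := by
    refine pos_of_mul_pos_right (a := (m : ℝ) + 1) ?_ (by positivity)
    rw [← mul_integral_exp_mul_cos_mul_sin_pow_add_two]
    exact mul_pos hx hA
  have hdiv : besselRatio (m + 2) x / x = A / ((m + 1) * B) := by
    rw [hf]
    field_simp
  refine ⟨?_, ?_, ?_⟩
  · rw [hdiv]
    positivity
  · rw [hdiv, hN1, div_lt_div_iff₀ (by positivity) (by positivity)]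
    nlinarith
  · rw [hf', div_pow, div_lt_one (by positivity)]
    exact pow_lt_pow_left₀ hCB hC.le two_ne_zero
end
end
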